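/- Let T(V) be the tensor (free associative) algebra over a field of characteristic 0 on a set of generators e₁,…,e_n, equipped with the bialgebra structure in which every generator e_i is primitive. Then the element P = Σ_{σ ∈ S_n} (-1)^{σ^{-1}(1)-1} · C(n-1, σ^{-1}(1)-1) · e_{σ(1)} e_{σ(2)} ⋯ e_{σ(n)} is primitive, i.e., Δ(P) = P ⊗ 1 + 1 ⊗ P. -/
import Mathlib
open TensorProduct Equiv

section Prim
variable (K : Type*) {A : Type*} [CommRing K] [Ring A] [Bialgebra K A]

def IsPrim (a : A) : Prop :=
  Coalgebra.comul (R := K) a = a ⊗ₜ[K] 1 + 1 ⊗ₜ[K] a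

variable {K}

lemma isPrim_zero : IsPrim K (0 : A) := by simp [IsPrim]

lemma isPrim_sum {ι : Type*} (s : Finset ι) (f : ι → A)
    (h : ∀ i ∈ s, IsPrim K (f i)) : IsPrim K (∑ i ∈ s, f i) := by
  unfold IsPrim at *
  rw [map_sum]
  rw [Finset.sum_congr rfl h, Finset.sum_add_distrib, ← sum_tmul, ← tmul_sum]

lemma isPrim_bracket {a b : A} (ha : IsPrim K a) (hb : IsPrim K b) :
    IsPrim K (a * b - b * a) := by
  unfold IsPrim at *
  rw [map_sub, Bialgebra.comul_mul, Bialgebra.comul_mul, ha, hb]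
  simp only [add_mul, mul_add, Algebra.TensorProduct.tmul_mul_tmul, one_mul, mul_one,
    sub_tmul, tmul_sub]
  abel

end Prim

section Combin
variable {n : ℕ}

def aFun (p : Fin (n + 2)) (t : Fin (n + 1)) : Fin (n + 2) := Equiv.swap 0 p t.succ

lemma swap_ne_zero {p z : Fin (n + 2)} (h : z ≠ p) : Equiv.swap 0 p z ≠ 0 := by
  intro hz
  apply h
  have := congrArg (Equiv.swap (0 : Fin (n+2)) p) hz
  simpa [Equiv.swap_apply_self] using this

def aInv (p z : Fin (n + 2)) (h : z ≠ p) : Fin (n + 1) :=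
  (Equiv.swap 0 p z).pred (swap_ne_zero h)

@[simp] lemma aFun_aInv (p z : Fin (n + 2)) (h : z ≠ p) : aFun p (aInv p z h) = z := by
  simp [aFun, aInv, Fin.succ_pred, Equiv.swap_apply_self]

def Elast : Fin (n + 2) × Perm (Fin (n + 1)) ≃ Perm (Fin (n + 2)) :=
  Equiv.Perm.decomposeFin.symm.trans (Equiv.mulRight (finRotate (n + 2)))

lemma Efirst_succ (p : Fin (n+2)) (ρ : Perm (Fin (n+1))) (t : Fin (n+1)) :
    Equiv.Perm.decomposeFin.symm (p, ρ) t.succ = aFun p (ρ t) := by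
  simp [aFun]

lemma Elast_last (p : Fin (n+2)) (ρ : Perm (Fin (n+1))) :
    Elast (p, ρ) (Fin.last (n + 1)) = p := by
  simp [Elast, Perm.mul_apply, finRotate_last]

lemma Elast_castSucc (p : Fin (n+2)) (ρ : Perm (Fin (n+1))) (i : Fin (n+1)) :
    Elast (p, ρ) i.castSucc = aFun p (ρ i) := by
  simp [Elast, Perm.mul_apply, Fin.coeSucc_eq_succ, aFun]

lemma Efirst_inv_self (p : Fin (n+2)) (ρ : Perm (Fin (n+1))) :
    (Equiv.Perm.decomposeFin.symm (p, ρ))⁻¹ p = 0 := by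
  rw [Perm.inv_eq_iff_eq]; simp

lemma Efirst_inv_a (p : Fin (n+2)) (ρ : Perm (Fin (n+1))) (t : Fin (n+1)) :
    (Equiv.Perm.decomposeFin.symm (p, ρ))⁻¹ (aFun p t) = (ρ⁻¹ t).succ := by
  rw [Perm.inv_eq_iff_eq, Efirst_succ]; simp

lemma Elast_inv_self (p : Fin (n+2)) (ρ : Perm (Fin (n+1))) :
    (Elast (p, ρ))⁻¹ p = Fin.last (n + 1) := by
  rw [Perm.inv_eq_iff_eq, Elast_last]

lemma Elast_inv_a (p : Fin (n+2)) (ρ : Perm (Fin (n+1))) (t : Fin (n+1)) :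
    (Elast (p, ρ))⁻¹ (aFun p t) = (ρ⁻¹ t).castSucc := by
  rw [Perm.inv_eq_iff_eq, Elast_castSucc]; simp

end Combin

theorem master {K A : Type*} [CommRing K] [Ring A] [Bialgebra K A] :
    ∀ (n : ℕ) (e : Fin (n+1) → A), (∀ i, IsPrim K (e i)) → ∀ z : Fin (n+1),
    IsPrim K (∑ σ : Perm (Fin (n+1)),
      ((-1 : K) ^ ((σ⁻¹ z : Fin (n+1)) : ℕ) * ((n.choose ((σ⁻¹ z : Fin (n+1)) : ℕ)) : K)) •
        (List.ofFn fun i => e (σ i)).prod) := by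
  intro n
  induction n with
  | zero =>
    intro e he z
    haveI : Subsingleton (Fin (0+1)) := ⟨fun a b => Fin.ext (by omega)⟩
    haveI : Subsingleton (Perm (Fin (0+1))) :=
      ⟨fun a b => Equiv.ext fun i => Subsingleton.elim _ _⟩
    rw [Fintype.sum_subsingleton _ (1 : Perm (Fin 1))]
    simpa [Subsingleton.elim z 0] using he 0
  | succ n ih =>
    intro e he z
    set Q : ∀ p : Fin (n+2), z ≠ p → A := fun p h =>
      ∑ ρ : Perm (Fin (n+1)),
        ((-1 : K) ^ ((ρ⁻¹ (aInv p z h) : Fin (n+1)) : ℕ)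
            * ((n.choose ((ρ⁻¹ (aInv p z h) : Fin (n+1)) : ℕ)) : K)) •
          (List.ofFn fun i => e (aFun p (ρ i))).prod with hQ
    have coeff : ∀ k : ℕ, ((-1 : K) ^ k * (((n+1).choose k : ℕ) : K))
        = (-1 : K)^k * ((n.choose k : ℕ) : K)
          + (if k = 0 then 0 else (-1 : K)^k * ((n.choose (k-1) : ℕ) : K)) := by
      intro k
      cases k with
      | zero => simp
      | succ j =>
        rw [Nat.choose_succ_succ]
        simp only [Nat.succ_sub_one, if_neg (Nat.succ_ne_zero j)]
        push_cast
        ring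
    have hA : (∑ σ : Perm (Fin (n+2)),
          ((-1 : K) ^ ((σ⁻¹ z : Fin (n+2)) : ℕ)
              * ((n.choose ((σ⁻¹ z : Fin (n+2)) : ℕ)) : K)) •
            (List.ofFn fun i => e (σ i)).prod)
        = ∑ p : Fin (n+2), if h : z = p then 0 else (Q p h) * e p := by
      rw [← Equiv.sum_comp (Elast (n := n)) (fun σ : Perm (Fin (n+2)) =>
        ((-1 : K) ^ ((σ⁻¹ z : Fin (n+2)) : ℕ)
            * ((n.choose ((σ⁻¹ z : Fin (n+2)) : ℕ)) : K)) •
          (List.ofFn fun i => e (σ i)).prod), Fintype.sum_prod_type]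
      refine Finset.sum_congr rfl fun p _ => ?_
      by_cases h : z = p
      · rw [dif_pos h]
        refine Finset.sum_eq_zero fun ρ _ => ?_
        rw [h, Elast_inv_self]
        simp [Nat.choose_succ_self]
      · rw [dif_neg h]
        simp only [hQ]
        rw [Finset.sum_mul]
        refine Finset.sum_congr rfl fun ρ _ => ?_
        have hz : (Elast (p, ρ))⁻¹ z = (ρ⁻¹ (aInv p z h)).castSucc := by
          conv_lhs => rw [← aFun_aInv p z h]
          rw [Elast_inv_a]
        rw [smul_mul_assoc]
        congr 1
        · rw [hz, Fin.coe_castSucc]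
        · rw [List.ofFn_succ']
          simp only [List.concat_eq_append, List.prod_append, List.prod_cons, List.prod_nil,
            Elast_castSucc, Elast_last, mul_one]
    have hB : (∑ σ : Perm (Fin (n+2)),
          (if ((σ⁻¹ z : Fin (n+2)) : ℕ) = 0 then (0:K) else
            (-1 : K) ^ ((σ⁻¹ z : Fin (n+2)) : ℕ)
              * ((n.choose (((σ⁻¹ z : Fin (n+2)) : ℕ) - 1)) : K)) •
            (List.ofFn fun i => e (σ i)).prod)
        = ∑ p : Fin (n+2), if h : z = p then 0 else -(e p * (Q p h)) := by
      rw [← Equiv.sum_comp (Equiv.Perm.decomposeFin.symm) (fun σ : Perm (Fin (n+2)) =>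
        (if ((σ⁻¹ z : Fin (n+2)) : ℕ) = 0 then (0:K) else
            (-1 : K) ^ ((σ⁻¹ z : Fin (n+2)) : ℕ)
              * ((n.choose (((σ⁻¹ z : Fin (n+2)) : ℕ) - 1)) : K)) •
          (List.ofFn fun i => e (σ i)).prod), Fintype.sum_prod_type]
      refine Finset.sum_congr rfl fun p _ => ?_
      by_cases h : z = p
      · rw [dif_pos h]
        refine Finset.sum_eq_zero fun ρ _ => ?_
        rw [h, Efirst_inv_self]
        simp
      · rw [dif_neg h]
        simp only [hQ]
        rw [Finset.mul_sum, ← Finset.sum_neg_distrib]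
        refine Finset.sum_congr rfl fun ρ _ => ?_
        have hz : (Equiv.Perm.decomposeFin.symm (p, ρ))⁻¹ z = (ρ⁻¹ (aInv p z h)).succ := by
          conv_lhs => rw [← aFun_aInv p z h]
          rw [Efirst_inv_a]
        rw [hz, Fin.val_succ, List.ofFn_succ]
        simp only [List.prod_cons, Equiv.Perm.decomposeFin_symm_apply_zero, Efirst_succ]
        rw [if_neg (Nat.succ_ne_zero _), Nat.succ_sub_one]
        rw [mul_smul_comm, ← neg_smul]
        congr 1
        ring
    have key : (∑ σ : Perm (Fin (n+2)),
          ((-1 : K) ^ ((σ⁻¹ z : Fin (n+2)) : ℕ)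
              * (((n+1).choose ((σ⁻¹ z : Fin (n+2)) : ℕ)) : K)) •
            (List.ofFn fun i => e (σ i)).prod)
        = ∑ p : Fin (n+2), if h : z = p then 0 else ((Q p h) * e p - e p * (Q p h)) := by
      calc (∑ σ : Perm (Fin (n+2)),
          ((-1 : K) ^ ((σ⁻¹ z : Fin (n+2)) : ℕ)
              * (((n+1).choose ((σ⁻¹ z : Fin (n+2)) : ℕ)) : K)) •
            (List.ofFn fun i => e (σ i)).prod)
          = ∑ σ : Perm (Fin (n+2)),
            (((-1 : K) ^ ((σ⁻¹ z : Fin (n+2)) : ℕ)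
              * ((n.choose ((σ⁻¹ z : Fin (n+2)) : ℕ)) : K)) •
              (List.ofFn fun i => e (σ i)).prod
            + (if ((σ⁻¹ z : Fin (n+2)) : ℕ) = 0 then (0:K) else
                (-1 : K) ^ ((σ⁻¹ z : Fin (n+2)) : ℕ)
                  * ((n.choose (((σ⁻¹ z : Fin (n+2)) : ℕ) - 1)) : K)) •
              (List.ofFn fun i => e (σ i)).prod) := by
            refine Finset.sum_congr rfl fun σ _ => ?_
            rw [← add_smul, ← coeff]
        _ = _ := by
            rw [Finset.sum_add_distrib, hA, hB, ← Finset.sum_add_distrib]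
            refine Finset.sum_congr rfl fun p _ => ?_
            by_cases h : z = p
            · simp [h]
            · rw [dif_neg h, dif_neg h, dif_neg h, sub_eq_add_neg]
    rw [key]
    refine isPrim_sum _ _ fun p _ => ?_
    by_cases h : z = p
    · rw [dif_pos h]; exact isPrim_zero
    · rw [dif_neg h]
      exact isPrim_bracket (ih (fun t => e (aFun p t)) (fun t => he _) (aInv p z h)) (he p)

/-- If `e₁,…,e_n` are primitive elements of a bialgebra over a field of
characteristic zero (e.g. the generators of the tensor algebra), then
`P = Σ_{σ ∈ S_n} (-1)^{σ⁻¹(1)-1} C(n-1, σ⁻¹(1)-1) e_{σ(1)} ⋯ e_{σ(n)}`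
is primitive. -/
theorem stmt_5 {K A : Type*} [Field K] [CharZero K] [Ring A] [Bialgebra K A]
    (n : ℕ) (hn : 0 < n) (e : Fin n → A)
    (he : ∀ i, Coalgebra.comul (R := K) (e i) = e i ⊗ₜ[K] 1 + 1 ⊗ₜ[K] e i)
    (P : A)
    (hP : P = ∑ σ : Equiv.Perm (Fin n),
        ((-1 : K) ^ ((σ⁻¹ (⟨0, hn⟩ : Fin n) : Fin n) : ℕ)
            * ((n - 1).choose ((σ⁻¹ (⟨0, hn⟩ : Fin n) : Fin n) : ℕ) : K))
          • (List.ofFn fun i => e (σ i)).prod) :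
    Coalgebra.comul (R := K) P = P ⊗ₜ[K] 1 + 1 ⊗ₜ[K] P := by
  subst hP
  obtain ⟨m, rfl⟩ : ∃ m, n = m + 1 := ⟨n - 1, (Nat.succ_pred_eq_of_pos hn).symm⟩
  exact master m e he ⟨0, hn⟩
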